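/- arXiv:1203.1235 — 3 statements merged into one kernel-verified Lean document; each statement's English description precedes it below -/
import Mathlib

section
/- If α < ω₁ and f : α → ω is continuous with respect to the order topology on α, then there is a cofinal subset C of α of order type at most ω such that for all ε < α, the value f(ε) depends only on the cardinality of ε ∩ C (i.e., there is a function g : ℕ → ω with f(ε) = g(|ε ∩ C|) for all ε < α). -/
/-!
Call `σ` a jump of `f` if `f (σ + 1) ≠ f σ`. Continuity at a limit `δ` makes `f` constant on
some interval `(β, δ)`, so by induction `f` has only finitely many jumps below each `x < α`,
and `f` is constant on every interval `[ε, ε')` free of jumps. As `α` is countable it has a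
cofinal subset of order type at most `ω`; let `C` be its union with the jumps. If `ε ≤ ε'` and
`C` has as many elements below `ε` as below `ε'`, then `[ε, ε')` misses `C`, hence contains no
jump, and `f ε = f ε'`.
-/

noncomputable section

open Set

/-- The first uncountable ordinal. -/
def omega1 : Ordinal := (Cardinal.aleph 1).ord

/-- `δ` is a limit point of the set of ordinals `X`. -/
def IsLimitPointOf (X : Set Ordinal) (δ : Ordinal) : Prop :=
  ∀ β < δ, ∃ ε ∈ X, β < ε ∧ ε < δ

/-- `rankGE X δ μ` says that the Cantor–Bendixson rank of `δ` with respect to `X`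
is at least `μ`:  `rank(X, δ) ≥ 1` iff `δ` is a limit point of `X`, and for `μ > 1`,
`rank(X, δ) ≥ μ` iff for every `η < μ`, `δ` is a limit of ordinals `ε` with
`rank(X, ε) ≥ η`. -/
def rankGE (X : Set Ordinal) (δ μ : Ordinal) : Prop :=
  ∀ η : Ordinal, η < μ →
    ((η = 0 → IsLimitPointOf X δ) ∧
     (η ≠ 0 → ∀ β < δ, ∃ ε, β < ε ∧ ε < δ ∧ rankGE X ε η))
termination_by μ
decreasing_by assumption

/-- A club (closed unbounded) subset of `ω₁`. -/
def IsClubOmega1 (C : Set Ordinal) : Prop :=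
  C ⊆ Set.Iio omega1 ∧ (∀ α < omega1, ∃ β ∈ C, α < β) ∧
    (∀ δ, δ < omega1 → IsLimitPointOf C δ → δ ∈ C)

/-- A ladder system on `ω₁`: each countable limit ordinal `δ` gets a cofinal subset
`A δ ⊆ δ` of order type `ω`. -/
def IsLadder (A : Ordinal → Set Ordinal) : Prop :=
  ∀ δ, δ < omega1 → Order.IsSuccLimit δ →
    A δ ⊆ Set.Iio δ ∧ (∀ β < δ, ∃ γ ∈ A δ, β < γ) ∧ (A δ).Infinite ∧
      ∀ x < δ, (A δ ∩ Set.Iio x).Finite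

/-- A normal (strictly increasing and continuous) function on the ordinals below `ω₁`. -/
def IsNormalW1 (F : Ordinal → Ordinal) : Prop :=
  (∀ α, α < omega1 → F α < omega1) ∧
  (∀ α β, α < β → β < omega1 → F α < F β) ∧
  (∀ δ, δ < omega1 → Order.IsSuccLimit δ → F δ = sSup (F '' Set.Iio δ))

/-- An (additively) indecomposable nonzero ordinal. -/
def Indecomposable (δ : Ordinal) : Prop :=
  0 < δ ∧ ∀ β < δ, ∀ γ < δ, β + γ < δ

open Order Topology

theorem countable_Iio_of_lt_omega1 {α : Ordinal} (hα : α < omega1) : (Iio α).Countable := by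
  rw [← Cardinal.le_aleph0_iff_set_countable, Cardinal.mk_Iio_ordinal,
    Cardinal.lift_le_aleph0, ← Cardinal.lt_aleph_one_iff]
  exact Cardinal.lt_ord.1 hα

theorem Set.Countable.exists_cofinal_subset {ι : Type*} [LinearOrder ι] {S : Set ι}
    (hS : S.Countable) :
    ∃ T ⊆ S, (∀ x ∈ S, ∃ y ∈ T, x ≤ y) ∧ ∀ x ∈ S, (T ∩ Iio x).Finite := by
  rcases S.eq_empty_or_nonempty with rfl | hne
  · exact ⟨∅, empty_subset _, by simp, by simp⟩
  obtain ⟨e, rfl⟩ := hS.exists_eq_range hne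
  let s : ℕ → ι := fun n => (Finset.range (n + 1)).sup' Finset.nonempty_range_add_one e
  have hs_mem : ∀ n, s n ∈ range e := fun n => by
    obtain ⟨i, -, hi⟩ := Finset.exists_mem_eq_sup' Finset.nonempty_range_add_one e
    exact ⟨i, hi.symm⟩
  have hle_s : ∀ n, e n ≤ s n := fun n =>
    Finset.le_sup' e (Finset.mem_range.2 n.lt_succ_self)
  have hs_mono : Monotone s := fun m n hmn =>
    Finset.sup'_mono e (Finset.range_subset_range.2 (by omega)) _
  refine ⟨range s, range_subset_iff.2 hs_mem, ?_, ?_⟩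
  · rintro _ ⟨k, rfl⟩
    exact ⟨s k, mem_range_self k, hle_s k⟩
  · rintro _ ⟨k, rfl⟩
    refine ((finite_Iio k).image s).subset ?_
    rintro _ ⟨⟨n, rfl⟩, hn⟩
    exact ⟨n, lt_of_not_ge fun hkn => (hle_s k).not_gt ((hs_mono hkn).trans_lt hn), rfl⟩

theorem exists_lt_forall_Ioo_eq_of_continuousAt {ι X : Type*} [LinearOrder ι]
    [TopologicalSpace ι] [OrderTopology ι] [TopologicalSpace X] [DiscreteTopology X]
    {F : ι → X} {δ l : ι} (hF : ContinuousAt F δ) (hl : l < δ) :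
    ∃ β < δ, ∀ t ∈ Ioo β δ, F t = F δ := by
  have hmem : F ⁻¹' {F δ} ∈ 𝓝[<] δ :=
    nhdsWithin_le_nhds (hF ((isOpen_discrete {F δ}).mem_nhds rfl))
  exact (mem_nhdsLT_iff_exists_Ioo_subset' hl).1 hmem

def jumpSet {X : Type*} (F : Ordinal → X) (α : Ordinal) : Set Ordinal :=
  {σ | succ σ < α ∧ F (succ σ) ≠ F σ}

section Jumps

variable {X : Type*} {F : Ordinal → X} {α : Ordinal}

theorem jumpSet_subset_Iio : jumpSet F α ⊆ Iio α :=
  fun _ hσ => (lt_succ _).trans hσ.1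

variable [TopologicalSpace X] [DiscreteTopology X]

theorem eq_of_disjoint_jumpSet_Ico (hF : ContinuousOn F (Iio α)) {ε ε' : Ordinal}
    (hε' : ε' < α) (hle : ε ≤ ε') (hD : Disjoint (jumpSet F α) (Ico ε ε')) : F ε = F ε' := by
  induction ε' using WellFoundedLT.induction with
  | _ ε' IH =>
    rcases hle.eq_or_lt with rfl | hlt
    · rfl
    rcases Ordinal.zero_or_succ_or_isSuccLimit ε' with rfl | ⟨σ, rfl⟩ | hlim
    · exact absurd hlt (zero_le (a := ε)).not_gt
    · have hεσ : ε ≤ σ := lt_succ_iff.1 hlt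
      have hσ : σ ∉ jumpSet F α := hD.notMem_of_mem_right ⟨hεσ, lt_succ σ⟩
      have hjump : F (succ σ) = F σ := not_not.1 fun h => hσ ⟨hε', h⟩
      rw [IH σ (lt_succ σ) ((lt_succ σ).trans hε') hεσ
        (hD.mono_right (Ico_subset_Ico_right (le_succ σ))), hjump]
    · obtain ⟨β, hβ, hconst⟩ := exists_lt_forall_Ioo_eq_of_continuousAt
        (hF.continuousAt (Iio_mem_nhds hε')) hlt
      have ht : succ (max β ε) < ε' := hlim.succ_lt (max_lt hβ hlt)
      have hεt : ε ≤ succ (max β ε) := (le_max_right β ε).trans (le_succ _)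
      rw [IH _ ht (ht.trans hε') hεt (hD.mono_right (Ico_subset_Ico_right ht.le)),
        hconst _ ⟨(le_max_left β ε).trans_lt (lt_succ _), ht⟩]

theorem finite_jumpSet_inter_Iio (hF : ContinuousOn F (Iio α)) {x : Ordinal} (hx : x < α) :
    (jumpSet F α ∩ Iio x).Finite := by
  induction x using WellFoundedLT.induction with
  | _ x IH =>
    rcases Ordinal.zero_or_succ_or_isSuccLimit x with rfl | ⟨σ, rfl⟩ | hlim
    · simp
    · refine ((IH σ (lt_succ σ) ((lt_succ σ).trans hx)).insert σ).subset ?_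
      rintro t ⟨ht, htσ⟩
      rcases (lt_succ_iff.1 (mem_Iio.1 htσ)).eq_or_lt with rfl | h
      · exact mem_insert _ _
      · exact mem_insert_of_mem _ ⟨ht, h⟩
    · obtain ⟨β, hβ, hconst⟩ := exists_lt_forall_Ioo_eq_of_continuousAt
        (hF.continuousAt (Iio_mem_nhds hx)) hlim.bot_lt
      have hβx : succ β < x := hlim.succ_lt hβ
      refine (IH _ hβx (hβx.trans hx)).subset ?_
      rintro σ ⟨hσ, hσx⟩
      refine ⟨hσ, mem_Iio.2 <| lt_succ_iff.2 (le_of_not_gt fun hβσ => hσ.2 ?_)⟩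
      rw [hconst σ ⟨hβσ, hσx⟩, hconst (succ σ) ⟨hβσ.trans (lt_succ σ), hlim.succ_lt hσx⟩]

theorem eq_of_ncard_inter_Iio_eq (hF : ContinuousOn F (Iio α)) {C : Set Ordinal}
    (hJC : jumpSet F α ⊆ C) (hC : ∀ x < α, (C ∩ Iio x).Finite) {ε ε' : Ordinal}
    (hε : ε < α) (hε' : ε' < α) (h : (C ∩ Iio ε).ncard = (C ∩ Iio ε').ncard) :
    F ε = F ε' := by
  wlog hle : ε ≤ ε' generalizing ε ε'
  · exact (this hε' hε h.symm (le_of_not_ge hle)).symm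
  have hCε : C ∩ Iio ε = C ∩ Iio ε' :=
    eq_of_subset_of_ncard_le (inter_subset_inter_right _ (Iio_subset_Iio hle)) h.ge (hC ε' hε')
  refine eq_of_disjoint_jumpSet_Ico hF hε' hle (disjoint_left.2 fun t ht ht' => ?_)
  have : t ∈ C ∩ Iio ε := hCε ▸ ⟨hJC ht, ht'.2⟩
  exact (not_lt.2 ht'.1) this.2

end Jumps

/-- if `α < ω₁` and `f : α → ω` is continuous, there is a cofinal
`C ⊆ α` of order type at most `ω` such that `f ε` depends only on `|ε ∩ C|`. -/
theorem stmt4 (α : Ordinal) (hα : α < omega1) (f : Set.Iio α → ℕ) (hf : Continuous f) :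
    ∃ C : Set Ordinal, C ⊆ Set.Iio α ∧ (∀ β < α, ∃ γ ∈ C, β ≤ γ) ∧
      (∀ x < α, (C ∩ Set.Iio x).Finite) ∧
      ∃ g : ℕ → ℕ, ∀ ε : Set.Iio α, f ε = g (Nat.card ↥(C ∩ Set.Iio ε.val)) := by
  let F : Ordinal → ℕ := fun x => if h : x < α then f ⟨x, h⟩ else 0
  have hFf : ∀ ε : Iio α, F ε = f ε := fun ε => dif_pos ε.2
  have hF : ContinuousOn F (Iio α) := by
    rw [continuousOn_iff_continuous_domRestrict]
    convert hf using 1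
    exact funext hFf
  obtain ⟨T, hTα, hTcof, hTfin⟩ := (countable_Iio_of_lt_omega1 hα).exists_cofinal_subset
  let C := jumpSet F α ∪ T
  have hCfin : ∀ x < α, (C ∩ Iio x).Finite := fun x hx => by
    rw [union_inter_distrib_right]
    exact (finite_jumpSet_inter_Iio hF hx).union (hTfin x hx)
  refine ⟨C, union_subset jumpSet_subset_Iio hTα, fun β hβ => ?_, hCfin, ?_⟩
  · obtain ⟨γ, hγ, hβγ⟩ := hTcof β hβ
    exact ⟨γ, Or.inr hγ, hβγ⟩
  · have hfac : Function.FactorsThrough f fun ε : Iio α => Nat.card ↥(C ∩ Iio ε.val) :=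
      fun ε ε' h => by
        rw [← hFf, ← hFf]
        refine eq_of_ncard_inter_Iio_eq hF subset_union_left hCfin ε.2 ε'.2 ?_
        simpa only [Nat.card_coe_set_eq] using h
    exact ⟨Function.extend _ f 0, fun ε => (hfac.extend_apply 0 ε).symm⟩
end
end

section
/- Club Guessing implies mho: if there is a ladder system ⟨A_δ : δ ∈ Lim(ω₁)⟩ such that for every club C ⊆ ω₁ there is δ ∈ C with a final segment of A_δ contained in C, then there exists a sequence ⟨f_α : α < ω₁⟩ such that each f_α : α → ω is continuous (order topology) and for every club E ⊆ ω₁ there is δ ∈ E such that f_δ takes all values in ω on E ∩ δ. -/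
noncomputable section

open Set

/-- A club (closed unbounded) subset of `ω₁`. -/
def IsClubW1 (C : Set Ordinal) : Prop :=
  C ⊆ Set.Iio omega1 ∧ (∀ α < omega1, ∃ β ∈ C, α < β) ∧
    (∀ δ, δ < omega1 → IsLimitPointOf C δ → δ ∈ C)

/-!
Given a club `E`, club guessing yields a countable limit `δ ∈ E` whose ladder `A_δ` lies in `E`
from some point on. Let `f_δ(γ)` be the first coordinate of `Nat.unpair |A_δ ∩ γ|`, where
`|A_δ ∩ γ|` counts the ladder points below `γ`. As `A_δ` has order type `ω`, this count is
locally constant on `δ`, so `f_δ` is continuous; and each value `k` is taken at the ladder points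
whose index is of the form `Nat.pair k m`, all but finitely many of which lie in `E`.

Hypothesis and conclusion may speak about ordinals of different universes: the countable
ordinals of any two universes are order isomorphic through `Ordinal.lift`, and the ladder system
is carried along this isomorphism.
-/

open Filter Topology

universe u v

section LadderColouring

variable {ι : Type*} [LinearOrder ι]

lemma exists_mem_ncard_inter_Iio_eq [WellFoundedLT ι] {S : Set ι}
    (hinf : S.Infinite) (hfin : ∀ a ∈ S, (S ∩ Iio a).Finite) (m : ℕ) :
    ∃ a ∈ S, (S ∩ Iio a).ncard = m := by
  induction m with
  | zero =>
    obtain ⟨a, haS, hmin⟩ := wellFounded_lt.has_min S hinf.nonempty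
    refine ⟨a, haS, (ncard_eq_zero (hfin a haS)).2 ?_⟩
    exact eq_empty_of_forall_notMem fun x hx => hmin x hx.1 hx.2
  | succ m ih =>
    obtain ⟨a, haS, ha⟩ := ih
    have hfin' : (S ∩ Iic a).Finite := by
      rw [← Iio_insert, inter_insert_of_mem haS]
      exact (hfin a haS).insert a
    obtain ⟨b, ⟨hbS, hba⟩, hmin⟩ := wellFounded_lt.has_min _ (hinf.sdiff hfin').nonempty
    have hab : a < b := not_le.1 fun h => hba ⟨hbS, h⟩
    have hsucc : S ∩ Iio b = insert a (S ∩ Iio a) := by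
      ext x
      simp only [mem_inter_iff, mem_Iio, mem_insert_iff]
      constructor
      · rintro ⟨hxS, hxb⟩
        rcases lt_trichotomy x a with hxa | rfl | hax
        · exact Or.inr ⟨hxS, hxa⟩
        · exact Or.inl rfl
        · exact absurd hxb (hmin x ⟨hxS, fun hx => hax.not_ge hx.2⟩)
      · rintro (rfl | ⟨hxS, hxa⟩)
        exacts [⟨haS, hab⟩, ⟨hxS, hxa.trans hab⟩]
    refine ⟨b, hbS, ?_⟩
    rw [hsucc, ncard_insert_of_notMem (fun h => h.2.false) (hfin a haS), ha]

lemma exists_mem_diff_unpair_ncard_inter_Iio_eq [WellFoundedLT ι] {S T : Set ι}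
    (hinf : S.Infinite) (hfin : ∀ a ∈ S, (S ∩ Iio a).Finite) (hT : T.Finite) (n : ℕ) :
    ∃ a ∈ S \ T, (Nat.unpair (S ∩ Iio a).ncard).1 = n := by
  obtain ⟨K, hK⟩ := (hT.image fun t => (S ∩ Iio t).ncard).bddAbove
  obtain ⟨a, haS, ha⟩ := exists_mem_ncard_inter_Iio_eq hinf hfin (Nat.pair n (K + 1))
  refine ⟨a, ⟨haS, fun haT => ?_⟩, by rw [ha, Nat.unpair_pair]⟩
  have : Nat.pair n (K + 1) ≤ K := ha ▸ hK (mem_image_of_mem _ haT)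
  have := Nat.right_le_pair n (K + 1)
  omega

lemma eventually_inter_Iio_eq [TopologicalSpace ι] [OrderTopology ι] [SuccOrder ι]
    [NoMaxOrder ι] {S : Set ι} {γ : ι} (h : (S ∩ Iio γ).Finite) :
    ∀ᶠ y in 𝓝 γ, S ∩ Iio y = S ∩ Iio γ := by
  have hle : ∀ᶠ y in 𝓝 γ, y ≤ γ := by
    filter_upwards [Iio_mem_nhds (Order.lt_succ γ)] with y hy using Order.lt_succ_iff.1 hy
  have hgt : ∀ᶠ y in 𝓝 γ, ∀ s ∈ S ∩ Iio γ, s < y :=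
    h.eventually_all.2 fun s hs => Ioi_mem_nhds hs.2
  filter_upwards [hle, hgt] with y hy hy'
  exact Subset.antisymm (inter_subset_inter_right _ (Iio_subset_Iio hy))
    fun s hs => ⟨hs.1, hy' s hs⟩

-- The guard keeps `ladderColouring S α` continuous whatever `S α` is; on a ladder it holds.
open Classical in
def ladderColouring (S : ι → Set ι) (α : ι) (γ : Iio α) : ℕ :=
  if ∀ x < α, (S α ∩ Iio x).Finite then (Nat.unpair (S α ∩ Iio γ.1).ncard).1 else 0

lemma continuous_ladderColouring (S : ι → Set ι) [TopologicalSpace ι] [OrderTopology ι]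
    [SuccOrder ι] [NoMaxOrder ι] (α : ι) : Continuous (ladderColouring S α) := by
  unfold ladderColouring
  split_ifs with hfin
  · refine IsLocallyConstant.continuous ((IsLocallyConstant.iff_eventually_eq _).2 fun γ => ?_)
    filter_upwards [continuous_subtype_val.continuousAt.eventually
      (eventually_inter_Iio_eq (hfin γ.1 γ.2))] with y hy
    simp only [hy]
  · exact continuous_const

lemma exists_ladderColouring_eq [WellFoundedLT ι] (S : ι → Set ι) {δ : ι} {E : Set ι}
    (hsub : S δ ⊆ Iio δ) (hinf : (S δ).Infinite) (hfin : ∀ x < δ, (S δ ∩ Iio x).Finite)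
    (hE : (S δ \ E).Finite) (n : ℕ) :
    ∃ γ, ∃ hγ : γ < δ, γ ∈ E ∧ ladderColouring S δ ⟨γ, hγ⟩ = n := by
  obtain ⟨γ, ⟨hγS, hγE⟩, hγ⟩ := exists_mem_diff_unpair_ncard_inter_Iio_eq hinf
    (fun a ha => hfin a (hsub ha)) hE n
  refine ⟨γ, hsub hγS, not_not.1 fun h => hγE ⟨hγS, h⟩, ?_⟩
  rw [ladderColouring, if_pos hfin, hγ]

end LadderColouring

-- Meaningful only below `ω₁`, where the `ε`-choice has a witness.
def univCast (o : Ordinal.{u}) : Ordinal.{v} :=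
  Classical.epsilon fun o' => Ordinal.lift.{u} o' = Ordinal.lift.{v} o

lemma lift_omega1 : Ordinal.lift.{v} omega1.{u} = Ordinal.lift.{u} omega1.{v} := by
  simp only [omega1, Cardinal.lift_ord, Cardinal.lift_aleph, Ordinal.lift_one]

lemma lift_univCast {o : Ordinal.{u}} (ho : o < omega1) :
    Ordinal.lift.{u} (univCast.{u, v} o) = Ordinal.lift.{v} o :=
  Classical.epsilon_spec
    (Ordinal.mem_range_lift_of_le ((Ordinal.lift_lt.2 ho).le.trans_eq lift_omega1))

lemma univCast_lt_omega1 {o : Ordinal.{u}} (ho : o < omega1) : univCast.{u, v} o < omega1 := by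
  rw [← Ordinal.lift_lt.{u}, lift_univCast ho, ← lift_omega1]
  exact Ordinal.lift_lt.2 ho

lemma univCast_univCast {o : Ordinal.{u}} (ho : o < omega1) :
    univCast.{v, u} (univCast.{u, v} o) = o :=
  Ordinal.lift_inj.{v}.1 ((lift_univCast (univCast_lt_omega1 ho)).trans (lift_univCast ho))

lemma strictMonoOn_univCast : StrictMonoOn univCast.{u, v} (Iio omega1) :=
  fun a ha b hb hab => by
  rw [← Ordinal.lift_lt.{u}, lift_univCast ha, lift_univCast hb]
  exact Ordinal.lift_lt.2 hab

lemma univCast_lt_iff_lt_univCast {a : Ordinal.{u}} {b : Ordinal.{v}} (ha : a < omega1)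
    (hb : b < omega1) : univCast.{u, v} a < b ↔ a < univCast.{v, u} b := by
  rw [← strictMonoOn_univCast.lt_iff_lt (univCast_lt_omega1 ha) hb, univCast_univCast ha]

lemma IsClubW1.preimage_univCast {E : Set Ordinal.{v}} (hE : IsClubW1 E) :
    IsClubW1 {o : Ordinal.{u} | o < omega1 ∧ univCast.{u, v} o ∈ E} := by
  obtain ⟨hsub, hunb, hcl⟩ := hE
  refine ⟨fun o ho => ho.1, fun α hα => ?_, fun δ hδ hlim => ⟨hδ, ?_⟩⟩
  · obtain ⟨β, hβE, hαβ⟩ := hunb _ (univCast_lt_omega1 hα)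
    have hβ := hsub hβE
    exact ⟨univCast β, ⟨univCast_lt_omega1 hβ, by rwa [univCast_univCast hβ]⟩,
      (univCast_lt_iff_lt_univCast hα hβ).1 hαβ⟩
  refine hcl _ (univCast_lt_omega1 hδ) fun b hb => ?_
  have hb' : b < omega1 := hb.trans (univCast_lt_omega1 hδ)
  obtain ⟨ε, ⟨hε, hεE⟩, hbε, hεδ⟩ :=
    hlim _ ((univCast_lt_iff_lt_univCast hb' hδ).2 hb)
  exact ⟨univCast ε, hεE, (univCast_lt_iff_lt_univCast hb' hε).1 hbε,
    strictMonoOn_univCast hε hδ hεδ⟩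

-- Club guessing in a form that mentions neither limit ordinals nor cofinality, so that it
-- transfers along `univCast` without them.
def GuessesClubs (S : Ordinal → Set Ordinal) : Prop :=
  ∀ E, IsClubW1 E → ∃ δ ∈ E, S δ ⊆ Iio δ ∧ (S δ).Infinite ∧
    (∀ x < δ, (S δ ∩ Iio x).Finite) ∧ (S δ \ E).Finite

lemma guessesClubs_image_univCast {A : Ordinal.{u} → Set Ordinal.{u}} (hA : IsLadder A)
    (hguess : ∀ C, IsClubW1 C → ∃ δ ∈ C, Order.IsSuccLimit δ ∧
      ∃ β < δ, ∀ γ ∈ A δ, β < γ → γ ∈ C) :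
    GuessesClubs.{v} fun δ => univCast '' A (univCast δ) := by
  intro E hE
  obtain ⟨δ, ⟨hδ, hδE⟩, hlim, β, hβδ, htail⟩ := hguess _ hE.preimage_univCast
  obtain ⟨hsub, -, hinf, hfin⟩ := hA δ hδ hlim
  have hA1 : ∀ γ ∈ A δ, γ < omega1 := fun γ hγ => (hsub hγ).trans hδ
  refine ⟨univCast δ, hδE, ?_⟩
  dsimp only
  rw [univCast_univCast hδ]
  refine ⟨?_, hinf.image (strictMonoOn_univCast.injOn.mono hA1), fun x hx => ?_, ?_⟩
  · rintro _ ⟨γ, hγ, rfl⟩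
    exact strictMonoOn_univCast (hA1 γ hγ) hδ (hsub hγ)
  · have hx' : x < omega1 := hx.trans (univCast_lt_omega1 hδ)
    have hfin' := hfin (univCast x) ((univCast_lt_iff_lt_univCast hx' hδ).2 hx)
    refine (hfin'.image univCast).subset ?_
    rintro _ ⟨⟨γ, hγ, rfl⟩, hγx⟩
    exact ⟨γ, ⟨hγ, (univCast_lt_iff_lt_univCast (hA1 γ hγ) hx').1 hγx⟩, rfl⟩
  · refine ((hfin (Order.succ β) (hlim.succ_lt hβδ)).image univCast).subset ?_
    rintro _ ⟨⟨γ, hγ, rfl⟩, hγE⟩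
    have hγβ : γ ≤ β := not_lt.1 fun hβγ => hγE (htail γ hγ hβγ).2
    exact ⟨γ, ⟨hγ, Order.lt_succ_iff.2 hγβ⟩, rfl⟩

/-- Club Guessing implies `℧` (mho). -/
theorem stmt6
    (hCG : ∃ A : Ordinal → Set Ordinal, IsLadder A ∧
      ∀ C, IsClubW1 C → ∃ δ ∈ C, Order.IsSuccLimit δ ∧
        ∃ β < δ, ∀ γ ∈ A δ, β < γ → γ ∈ C) :
    ∃ f : (α : Ordinal) → Set.Iio α → ℕ,
      (∀ α, α < omega1 → Continuous (f α)) ∧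
      ∀ E, IsClubW1 E → ∃ δ ∈ E, ∀ n : ℕ, ∃ γ, ∃ hγ : γ < δ,
        γ ∈ E ∧ f δ ⟨γ, hγ⟩ = n := by
  obtain ⟨A, hA, hguess⟩ := hCG
  refine ⟨ladderColouring fun δ => univCast '' A (univCast δ),
    fun α _ => continuous_ladderColouring _ α, fun E hE => ?_⟩
  obtain ⟨δ, hδE, hsub, hinf, hfin, hE⟩ := guessesClubs_image_univCast hA hguess E hE
  exact ⟨δ, hδE, exists_ladderColouring_eq _ hsub hinf hfin hE⟩
end
end

section
/- In the poset ℙ_𝒢 (as defined for the mho application), for every condition p = (f, ⟨k_ξ : ξ ∈ D⟩) and every ξ ∈ dom(f), there is a condition p' extending p with ξ ∈ D^{p'}; i.e., one can always choose a fresh color k not in g_{f(ξ)}''range(f) such that rank({γ < f(ξ) : g_{f(ξ)}(γ) ≠ k}, f(ξ)) = rank(f(ξ), f(ξ)). -/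
noncomputable section

open Set

universe v

/-- A condition of the poset `ℙ_𝒢` used to kill an instance of `℧`. -/
structure PGCond (g : (δ : Ordinal) → Set.Iio δ → ℕ) where
  s : Finset Ordinal
  f : Ordinal → Ordinal
  D : Finset Ordinal
  k : Ordinal → ℕ
  /-- (1): `f` is finite strictly increasing from `ω₁` to `ω₁`. -/
  hs : ∀ ξ ∈ s, ξ < omega1 ∧ f ξ < omega1
  hmono : ∀ ξ ∈ s, ∀ ζ ∈ s, ξ < ζ → f ξ < f ζ
  /-- (2): `rank(f ξ, f ξ) ≥ ξ`. -/
  hrank : ∀ ξ ∈ s, rankGE (Set.Iio (f ξ)) (f ξ) ξ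
  hD : D ⊆ s
  /-- (3): for `ξ ∈ D`, `g_{f ξ} '' range f` avoids `k ξ` and
  `rank({γ < f ξ : g_{f ξ} γ ≠ k ξ}, f ξ) = rank(f ξ, f ξ)`. -/
  hk : ∀ ξ ∈ D,
    (∀ ζ ∈ s, ∀ h : f ζ < f ξ, g (f ξ) ⟨f ζ, h⟩ ≠ k ξ) ∧
    (∀ μ : Ordinal.{v}, rankGE {γ | ∃ h : γ < f ξ, g (f ξ) ⟨γ, h⟩ ≠ k ξ} (f ξ) μ ↔
      rankGE (Set.Iio (f ξ)) (f ξ) μ)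

/-- Extension in `ℙ_𝒢`: `p₁ ≤ p₀`. -/
def PGLe {g : (δ : Ordinal) → Set.Iio δ → ℕ} (p₁ p₀ : PGCond g) : Prop :=
  p₀.s ⊆ p₁.s ∧ (∀ ξ ∈ p₀.s, p₁.f ξ = p₀.f ξ) ∧ p₀.D ⊆ p₁.D ∧
    ∀ ξ ∈ p₀.D, p₁.k ξ = p₀.k ξ

/-
For colors `c ≠ c'` the sets `{γ < δ : g_δ γ ≠ c}` and `{γ < δ : g_δ γ ≠ c'}` cover `δ`, and the
Cantor–Bendixson rank at `δ` of a union is the larger of the ranks of its parts, so at most one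
color can lower the rank of `δ = f ξ`. Only finitely many colors occur on `range f`, hence some
other color is fresh and keeps the full rank.

The rank equality in a condition quantifies over ranks `μ` in a universe that is a parameter of
`PGCond`, and the extension may use another one; the two readings agree because at `δ < ω₁`
every rank is at most `δ`, hence countable.
-/

universe u w

theorem forall_lt_or_forall_lt_of_antitone {α : Type*} [LinearOrder α] {p q : α → Prop}
    (hp : Antitone p) (hq : Antitone q) {a : α} (h : ∀ x < a, p x ∨ q x) :
    (∀ x < a, p x) ∨ ∀ x < a, q x := by
  by_contra! ⟨⟨x, hxa, hpx⟩, ⟨y, hya, hqy⟩⟩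
  rcases h (max x y) (max_lt hxa hya) with hp' | hq'
  · exact hpx (hp (le_max_left x y) hp')
  · exact hqy (hq (le_max_right x y) hq')

theorem forall_exists_between_or {α : Type*} [LinearOrder α] {δ : α} {P Q : α → Prop}
    (h : ∀ β < δ, ∃ ε, β < ε ∧ ε < δ ∧ (P ε ∨ Q ε)) :
    (∀ β < δ, ∃ ε, β < ε ∧ ε < δ ∧ P ε) ∨ ∀ β < δ, ∃ ε, β < ε ∧ ε < δ ∧ Q ε := by
  have anti (R : α → Prop) : Antitone fun β => ∃ ε, β < ε ∧ ε < δ ∧ R ε :=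
    fun _ _ hβ ⟨ε, hβε, hεδ, hε⟩ => ⟨ε, hβ.trans_lt hβε, hεδ, hε⟩
  refine forall_lt_or_forall_lt_of_antitone (anti P) (anti Q) fun β hβ => ?_
  obtain ⟨ε, hβε, hεδ, hε | hε⟩ := h β hβ
  exacts [Or.inl ⟨ε, hβε, hεδ, hε⟩, Or.inr ⟨ε, hβε, hεδ, hε⟩]

theorem isLimitPointOf_iff {X : Set Ordinal} {δ : Ordinal} :
    IsLimitPointOf X δ ↔ ∀ β < δ, ∃ ε, β < ε ∧ ε < δ ∧ ε ∈ X :=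
  forall₂_congr fun _ _ => exists_congr fun _ => by tauto

theorem Ordinal.lift_eq_zero {η : Ordinal.{u}} : Ordinal.lift.{w} η = 0 ↔ η = 0 := by
  rw [← Ordinal.lift_zero.{u, w}, Ordinal.lift_inj]

theorem omega1_lift : Ordinal.lift.{w} omega1.{u} = omega1.{max u w} := by
  simp [omega1]

theorem exists_lift_eq_of_lt_omega1 {μ : Ordinal.{w}} (h : μ < omega1.{w}) :
    ∃ ν : Ordinal.{0}, Ordinal.lift.{w} ν = μ := by
  rw [← omega1_lift.{0, w}] at h
  exact Ordinal.mem_range_lift_of_le h.le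

section Rank

variable {X A B : Set Ordinal.{u}} {δ : Ordinal.{u}}

def rankClause (X : Set Ordinal) (δ η : Ordinal) : Prop :=
  (η = 0 → IsLimitPointOf X δ) ∧
    (η ≠ 0 → ∀ β < δ, ∃ ε, β < ε ∧ ε < δ ∧ rankGE X ε η)

theorem rankGE_iff_forall_rankClause {μ : Ordinal.{w}} :
    rankGE X δ μ ↔ ∀ η < μ, rankClause X δ η := by
  rw [rankGE]; rfl

theorem rankGE.of_le {μ₁ μ₂ : Ordinal.{w}} (h : rankGE X δ μ₂) (hμ : μ₁ ≤ μ₂) :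
    rankGE X δ μ₁ := by
  rw [rankGE_iff_forall_rankClause] at h ⊢
  exact fun η hη => h η (hη.trans_le hμ)

theorem rankGE.isLimitPointOf {μ : Ordinal.{w}} (h : rankGE X δ μ) (hμ : μ ≠ 0) :
    IsLimitPointOf X δ :=
  (rankGE_iff_forall_rankClause.1 h 0 (pos_iff_ne_zero.2 hμ)).1 rfl

theorem rankGE.mono {μ : Ordinal.{w}} (h : rankGE A δ μ) (hAB : A ⊆ B) : rankGE B δ μ := by
  induction μ using WellFoundedLT.induction generalizing δ with
  | ind μ ih =>
  rw [rankGE_iff_forall_rankClause] at h ⊢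
  refine fun η hη => ⟨fun hη0 β hβ => ?_, fun hη0 β hβ => ?_⟩
  · obtain ⟨ε, hε, hβε, hεδ⟩ := (h η hη).1 hη0 β hβ
    exact ⟨ε, hAB hε, hβε, hεδ⟩
  · obtain ⟨ε, hβε, hεδ, hε⟩ := (h η hη).2 hη0 β hβ
    exact ⟨ε, hβε, hεδ, ih η hη hε⟩

theorem rankGE_zero_left {μ : Ordinal.{w}} : rankGE X 0 μ := by
  rw [rankGE_iff_forall_rankClause]
  exact fun _ _ => ⟨fun _ β hβ => absurd hβ not_lt_zero,
    fun _ β hβ => absurd hβ not_lt_zero⟩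

theorem rankClause_antitone : Antitone (rankClause X δ) := by
  intro η₁ η₂ hη ⟨h0, hpos⟩
  refine ⟨fun hη₁ => ?_, fun hη₁ β hβ => ?_⟩
  · rcases eq_or_ne η₂ 0 with hη₂ | hη₂
    · exact h0 hη₂
    intro β hβ
    obtain ⟨ε, hβε, hεδ, hε⟩ := hpos hη₂ β hβ
    obtain ⟨γ, hγ, hβγ, hγε⟩ := hε.isLimitPointOf hη₂ β hβε
    exact ⟨γ, hγ, hβγ, hγε.trans hεδ⟩
  · obtain ⟨ε, hβε, hεδ, hε⟩ := hpos (fun h => hη₁ (nonpos_iff_eq_zero.1 (h ▸ hη))) β hβ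
    exact ⟨ε, hβε, hεδ, hε.of_le hη⟩

theorem rankClause_union {η : Ordinal.{w}}
    (ih : ∀ ε, rankGE (A ∪ B) ε η → rankGE A ε η ∨ rankGE B ε η)
    (h : rankClause (A ∪ B) δ η) : rankClause A δ η ∨ rankClause B δ η := by
  rcases eq_or_ne η 0 with hη | hη
  · have hAB := isLimitPointOf_iff.1 (h.1 hη)
    exact (forall_exists_between_or hAB).imp
      (fun hA => ⟨fun _ => isLimitPointOf_iff.2 hA, (absurd hη ·)⟩)
      (fun hB => ⟨fun _ => isLimitPointOf_iff.2 hB, (absurd hη ·)⟩)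
  · have hAB : ∀ β < δ, ∃ ε, β < ε ∧ ε < δ ∧ (rankGE A ε η ∨ rankGE B ε η) := fun β hβ => by
      obtain ⟨ε, hβε, hεδ, hε⟩ := h.2 hη β hβ
      exact ⟨ε, hβε, hεδ, ih ε hε⟩
    exact (forall_exists_between_or hAB).imp (fun hA => ⟨(absurd · hη), fun _ => hA⟩)
      (fun hB => ⟨(absurd · hη), fun _ => hB⟩)

theorem rankGE_union {μ : Ordinal.{w}} :
    rankGE (A ∪ B) δ μ ↔ rankGE A δ μ ∨ rankGE B δ μ := by
  refine ⟨fun h => ?_, fun h => h.elim (·.mono subset_union_left) (·.mono subset_union_right)⟩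
  induction μ using WellFoundedLT.induction generalizing δ with
  | ind μ ih =>
  simp only [rankGE_iff_forall_rankClause] at h ⊢
  exact forall_lt_or_forall_lt_of_antitone rankClause_antitone rankClause_antitone
    fun η hη => rankClause_union (fun ε => ih η hη) (h η hη)

theorem rankGE_lift {μ : Ordinal.{w}} :
    rankGE X δ (Ordinal.lift.{v} μ) ↔ rankGE X δ μ := by
  induction μ using WellFoundedLT.induction generalizing δ with
  | ind μ ih =>
  have hclause : ∀ η < μ, rankClause X δ (Ordinal.lift.{v} η) ↔ rankClause X δ η :=
    fun η hη => by simp only [rankClause, ne_eq, Ordinal.lift_eq_zero, ih η hη]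
  simp only [rankGE_iff_forall_rankClause]
  constructor
  · exact fun h η hη => (hclause η hη).1 (h _ (Ordinal.lift_lt.2 hη))
  · intro h η hη
    obtain ⟨η, hημ, rfl⟩ := Ordinal.lt_lift_iff.1 hη
    exact (hclause η hημ).2 (h η hημ)

theorem rankGE.lift_le {μ : Ordinal.{w}} (h : rankGE X δ μ) (hδ : 0 < δ) :
    Ordinal.lift.{u} μ ≤ Ordinal.lift.{w} δ := by
  induction δ using WellFoundedLT.induction generalizing μ with
  | ind δ ih =>
  by_contra! hlt
  obtain ⟨η, hημ, hηδ⟩ := Ordinal.lt_lift_iff.1 hlt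
  have hη : η ≠ 0 := by
    rintro rfl
    exact hδ.ne (Ordinal.lift_inj.1 (by simpa using hηδ))
  obtain ⟨ε, hε0, hεδ, hε⟩ := (rankGE_iff_forall_rankClause.1 h η hημ).2 hη 0 hδ
  have := ih ε hεδ hε hε0
  rw [hηδ] at this
  exact (Ordinal.lift_lt.2 hεδ).not_ge this

end Rank

section FullRank

def FullRank (S : Set Ordinal.{u}) (δ : Ordinal.{u}) : Prop :=
  ∀ μ : Ordinal.{w}, rankGE S δ μ ↔ rankGE (Iio δ) δ μ

variable {S : Set Ordinal.{u}} {δ : Ordinal.{u}}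

theorem fullRank_iff (hS : S ⊆ Iio δ) :
    FullRank.{u, w} S δ ↔ ∀ μ : Ordinal.{w}, rankGE (Iio δ) δ μ → rankGE S δ μ :=
  forall_congr' fun _ => ⟨fun h => h.2, fun h => ⟨(·.mono hS), h⟩⟩

theorem FullRank.ulift (h : FullRank.{u, v} S δ) (hS : S ⊆ Iio δ) (hδ : δ < omega1) :
    FullRank.{u, w} S δ := by
  rw [fullRank_iff hS] at h ⊢
  intro μ hμ
  rcases eq_zero_or_pos δ with rfl | hδ0
  · exact rankGE_zero_left
  have hμω : μ < omega1.{w} := by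
    rw [← Ordinal.lift_lt.{u}, omega1_lift, ← omega1_lift.{u, w}]
    exact (hμ.lift_le hδ0).trans_lt (Ordinal.lift_lt.2 hδ)
  obtain ⟨ν, rfl⟩ := exists_lift_eq_of_lt_omega1 hμω
  rw [rankGE_lift] at hμ ⊢
  exact rankGE_lift.1 (h _ (rankGE_lift.2 hμ))

theorem fullRank_or_fullRank {A B : Set Ordinal.{u}} (hA : A ⊆ Iio δ) (hB : B ⊆ Iio δ)
    (hAB : Iio δ ⊆ A ∪ B) : FullRank.{u, w} A δ ∨ FullRank.{u, w} B δ := by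
  simp only [fullRank_iff hA, fullRank_iff hB]
  by_contra! ⟨⟨μ, hμ, hAμ⟩, ⟨ν, hν, hBν⟩⟩
  rcases le_total μ ν with hle | hle
  · rcases rankGE_union.1 (hν.mono hAB) with h | h
    exacts [hAμ (h.of_le hle), hBν h]
  · rcases rankGE_union.1 (hμ.mono hAB) with h | h
    exacts [hAμ h, hBν (h.of_le hle)]

end FullRank

section Color

variable {α : Type*} {δ : Ordinal.{u}}

def offColor (χ : Iio δ → α) (c : α) : Set Ordinal :=
  {γ | ∃ h : γ < δ, χ ⟨γ, h⟩ ≠ c}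

theorem offColor_subset (χ : Iio δ → α) (c : α) : offColor χ c ⊆ Iio δ :=
  fun _ ⟨h, _⟩ => h

theorem subsingleton_setOf_not_fullRank_offColor (χ : Iio δ → α) :
    {c | ¬ FullRank.{u, w} (offColor χ c) δ}.Subsingleton := by
  intro c hc c' hc'
  by_contra hne
  refine (fullRank_or_fullRank (offColor_subset χ c) (offColor_subset χ c') ?_).elim hc hc'
  intro γ hγ
  by_cases hχ : χ ⟨γ, hγ⟩ = c
  · exact Or.inr ⟨hγ, hχ ▸ hne⟩
  · exact Or.inl ⟨hγ, hχ⟩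

theorem exists_fresh_fullRank_color [Infinite α] (χ : Iio δ → α) {F : Set Ordinal}
    (hF : F.Finite) :
    ∃ c, (∀ γ ∈ F, ∀ h : γ < δ, χ ⟨γ, h⟩ ≠ c) ∧ FullRank.{u, w} (offColor χ c) δ := by
  let used : Set α := {c | ∃ γ ∈ F, ∃ h : γ < δ, χ ⟨γ, h⟩ = c}
  have hused : used.Finite :=
    (hF.biUnion fun γ _ => (Set.finite_range fun h : γ < δ => χ ⟨γ, h⟩)).subset
      fun c ⟨γ, hγ, h, hc⟩ => mem_biUnion hγ ⟨h, hc⟩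
  obtain ⟨c, hc⟩ := (hused.union (subsingleton_setOf_not_fullRank_offColor χ).finite).exists_notMem
  simp only [mem_union, mem_ofPred_eq, not_or, not_not] at hc
  exact ⟨c, fun γ hγ h hχ => hc.1 ⟨γ, hγ, h, hχ⟩, hc.2⟩

end Color

namespace PGCond

variable {g : (δ : Ordinal.{u}) → Iio δ → ℕ} (p : PGCond.{v, u} g)

def IsAdmissibleColor (ξ : Ordinal.{u}) (c : ℕ) : Prop :=
  (∀ ζ ∈ p.s, ∀ h : p.f ζ < p.f ξ, g (p.f ξ) ⟨p.f ζ, h⟩ ≠ c) ∧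
    FullRank.{u, w} (offColor (g (p.f ξ)) c) (p.f ξ)

variable {p}

theorem IsAdmissibleColor.ulift {ξ : Ordinal.{u}} {c : ℕ} (hξ : ξ ∈ p.s)
    (h : p.IsAdmissibleColor.{v, u, v} ξ c) : p.IsAdmissibleColor.{v, u, w} ξ c :=
  ⟨h.1, h.2.ulift (offColor_subset _ _) (p.hs ξ hξ).2⟩

theorem exists_isAdmissibleColor {ξ : Ordinal.{u}} (hξ : ξ ∈ p.s) :
    ∃ c, p.IsAdmissibleColor.{v, u, w} ξ c ∧ (ξ ∈ p.D → c = p.k ξ) := by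
  by_cases hξD : ξ ∈ p.D
  · exact ⟨p.k ξ, IsAdmissibleColor.ulift hξ (p.hk ξ hξD), fun _ => rfl⟩
  · obtain ⟨c, hfresh, hfull⟩ :=
      exists_fresh_fullRank_color (g (p.f ξ)) (p.s.finite_toSet.image p.f)
    exact ⟨c, ⟨fun ζ hζ => hfresh _ ⟨ζ, hζ, rfl⟩, hfull⟩, fun h => absurd h hξD⟩

def setColor {ξ : Ordinal.{u}} (hξ : ξ ∈ p.s) {c : ℕ} (hc : p.IsAdmissibleColor.{v, u, w} ξ c) :
    PGCond.{w, u} g where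
  s := p.s
  f := p.f
  D := insert ξ p.D
  k := Function.update p.k ξ c
  hs := p.hs
  hmono := p.hmono
  hrank := p.hrank
  hD := Finset.insert_subset hξ p.hD
  hk ζ hζ := by
    by_cases hζξ : ζ = ξ
    · subst hζξ
      rw [Function.update_self]
      exact hc
    · have hζD := (Finset.mem_insert.1 hζ).resolve_left hζξ
      rw [Function.update_of_ne hζξ]
      exact IsAdmissibleColor.ulift (p.hD hζD) (p.hk ζ hζD)

theorem setColor_le {ξ : Ordinal.{u}} (hξ : ξ ∈ p.s) {c : ℕ}
    (hc : p.IsAdmissibleColor.{v, u, w} ξ c) (hcD : ξ ∈ p.D → c = p.k ξ) :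
    PGLe (p.setColor hξ hc) p := by
  refine ⟨subset_rfl, fun _ _ => rfl, Finset.subset_insert ξ p.D, fun ζ hζ => ?_⟩
  by_cases hζξ : ζ = ξ
  · subst hζξ
    exact (Function.update_self ..).trans (hcD hζ)
  · exact Function.update_of_ne hζξ ..

theorem mem_setColor_D {ξ : Ordinal.{u}} (hξ : ξ ∈ p.s) {c : ℕ}
    (hc : p.IsAdmissibleColor.{v, u, w} ξ c) : ξ ∈ (p.setColor hξ hc).D :=
  Finset.mem_insert_self ξ p.D

end PGCond

theorem stmt18_general (g : (δ : Ordinal) → Set.Iio δ → ℕ)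
    (p : PGCond g) (ξ : Ordinal) (hξ : ξ ∈ p.s) :
    ∃ p' : PGCond g, PGLe p' p ∧ ξ ∈ p'.D := by
  obtain ⟨c, hc, hcD⟩ := p.exists_isAdmissibleColor hξ
  exact ⟨p.setColor hξ hc, p.setColor_le hξ hc hcD, p.mem_setColor_D hξ hc⟩

/-- every condition of `ℙ_𝒢` can be extended to one putting any
prescribed `ξ ∈ dom f` into the `D`-part. -/
theorem stmt18 (g : (δ : Ordinal) → Set.Iio δ → ℕ)
    (hg : ∀ δ, δ < omega1 → Continuous (g δ))
    (p : PGCond g) (ξ : Ordinal) (hξ : ξ ∈ p.s) :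
    ∃ p' : PGCond g, PGLe p' p ∧ ξ ∈ p'.D :=
  stmt18_general g p ξ hξ
end
end
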